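/- arXiv:1804.05090 — 6 statements merged into one kernel-verified Lean document; each statement's English description precedes it below -/
import Mathlib

section
/- Let G ∈ ℝ^{m×k} have orthonormal columns (GᵀG = I), Σ = diag(σ₁,...,σₖ) with σᵢ ≥ 0, and D ∈ ℝ^{k×k} a nonnegative diagonal matrix with entries arranged in an order matching Σ (both nonincreasing). Then for every m×k matrix V⊥ with orthonormal columns, Tr(V⊥ᵀ G Σ² Gᵀ V⊥ D) ≤ Tr(Σ² D), with equality when V⊥ = G. -/
/-!
With `M = Gᵀ V⊥`, the left-hand trace is `∑ i j, σᵢ² dⱼ Mᵢⱼ²`. Because `V⊥ V⊥ᵀ` and `G Gᵀ` are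
orthogonal projections, the squared entries of `M` form a doubly substochastic matrix `B`, and
for nonincreasing nonnegative `a`, `b` the form `∑ i j, aᵢ bⱼ Bᵢⱼ` is largest at `B = 1`: each
partial sum `∑ i ≤ t, (B b)ᵢ` is at most `∑ i ≤ t, bᵢ` (a fractional knapsack bound against the
threshold `b t`), and Abel summation against the nonincreasing `a` turns this into the claim.
-/

open Matrix BigOperators

open Finset

theorem Fin.sum_mul_nonneg_of_sum_Iic_nonneg {n : ℕ} {a e : Fin n → ℝ} (ha : Antitone a)
    (ha0 : ∀ i, 0 ≤ a i) (he : ∀ t, 0 ≤ ∑ i ∈ Iic t, e i) : 0 ≤ ∑ i, a i * e i := by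
  induction n with
  | zero => simp
  | succ n ih =>
    have hsplit : ∑ i, a i * e i = ∑ i : Fin n, (a i.castSucc - a (last n)) * e i.castSucc
        + a (last n) * ∑ i, e i := by
      rw [sum_univ_castSucc, sum_univ_castSucc e, mul_add, mul_sum]
      simp only [sub_mul, sum_sub_distrib]
      ring
    rw [hsplit]
    refine add_nonneg (ih (fun i j hij => sub_le_sub_right (ha (castSucc_le_castSucc_iff.2 hij)) _)
      (fun i => sub_nonneg.2 (ha (le_last _))) fun t => ?_) (mul_nonneg (ha0 _) ?_)
    · rw [← sum_Iic_castSucc]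
      exact he _
    · simpa [← top_eq_last, Iic_top] using he (last n)

theorem sum_mul_le_sum_Iic_of_antitone {ι : Type*} [LinearOrder ι] [Fintype ι]
    [LocallyFiniteOrderBot ι] {b w : ι → ℝ} (hb : Antitone b) (hb0 : ∀ i, 0 ≤ b i)
    (hw0 : ∀ j, 0 ≤ w j) (hw1 : ∀ j, w j ≤ 1) (t : ι) (hw : ∑ j, w j ≤ #(Iic t)) :
    ∑ j, b j * w j ≤ ∑ j ∈ Iic t, b j := by
  set χ : ι → ℝ := fun j => if j ∈ Iic t then 1 else 0
  -- `w j - χ j` is `≤ 0` where `b j ≥ b t` and `≥ 0` where `b j ≤ b t`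
  have hthreshold : ∀ j, b j * (w j - χ j) ≤ b t * (w j - χ j) := by
    intro j
    by_cases hj : j ∈ Iic t
    · simp only [χ, if_pos hj]
      nlinarith [hb (mem_Iic.1 hj), hw1 j]
    · simp only [χ, if_neg hj, sub_zero]
      exact mul_le_mul_of_nonneg_right (hb (le_of_lt (not_le.1 (mt mem_Iic.2 hj)))) (hw0 j)
  have hχb : ∑ j ∈ Iic t, b j = ∑ j, b j * χ j := by
    simp [χ, mul_ite, ← sum_filter, filter_ge_eq_Iic]
  have hχcard : (#(Iic t) : ℝ) = ∑ j, χ j := by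
    simp [χ, sum_boole, filter_ge_eq_Iic]
  calc ∑ j, b j * w j = ∑ j, b j * (w j - χ j) + ∑ j ∈ Iic t, b j := by
        rw [hχb, ← sum_add_distrib]; simp only [mul_sub, sub_add_cancel]
    _ ≤ ∑ j, b t * (w j - χ j) + ∑ j ∈ Iic t, b j := by
        gcongr ?_ + _
        exact sum_le_sum fun j _ => hthreshold j
    _ = b t * (∑ j, w j - #(Iic t)) + ∑ j ∈ Iic t, b j := by
        rw [hχcard, ← sum_sub_distrib, mul_sum]
    _ ≤ ∑ j ∈ Iic t, b j := by
        nlinarith [hb0 t]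

namespace Matrix

variable {m n p : Type*} [Fintype m] [Fintype n]

structure IsDoublySubstochastic (B : Matrix m n ℝ) : Prop where
  nonneg : ∀ i j, 0 ≤ B i j
  sum_row_le_one : ∀ i, ∑ j, B i j ≤ 1
  sum_col_le_one : ∀ j, ∑ i, B i j ≤ 1

theorem IsDoublySubstochastic.sum_mul_mul_le {k : ℕ} {a b : Fin k → ℝ}
    {B : Matrix (Fin k) (Fin k) ℝ} (hB : B.IsDoublySubstochastic) (ha : Antitone a)
    (ha0 : ∀ i, 0 ≤ a i) (hb : Antitone b) (hb0 : ∀ i, 0 ≤ b i) :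
    ∑ i, ∑ j, a i * b j * B i j ≤ ∑ i, a i * b i := by
  have hpartial (t : Fin k) : ∑ i ∈ Iic t, ∑ j, b j * B i j ≤ ∑ i ∈ Iic t, b i := by
    rw [sum_comm]
    simp_rw [← mul_sum]
    refine sum_mul_le_sum_Iic_of_antitone hb hb0 (fun j => sum_nonneg fun i _ => hB.nonneg i j)
      (fun j => ?_) t ?_
    · exact (sum_le_sum_of_subset_of_nonneg (subset_univ _) fun i _ _ => hB.nonneg i j).trans
        (hB.sum_col_le_one j)
    · rw [sum_comm]
      simpa using sum_le_sum fun i (_ : i ∈ Iic t) => hB.sum_row_le_one i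
  have := Fin.sum_mul_nonneg_of_sum_Iic_nonneg ha ha0 (e := fun i => b i - ∑ j, b j * B i j)
    fun t => by simpa [sum_sub_distrib] using hpartial t
  simp only [mul_sub, sum_sub_distrib, mul_sum, ← mul_assoc] at this
  linarith

theorem transpose_mul_self_apply_self (X : Matrix m p ℝ) (i : p) :
    (Xᵀ * X) i i = ∑ l, X l i ^ 2 := by
  simp [mul_apply, sq]

theorem sum_sq_transpose_mul_apply_le [DecidableEq n] {V : Matrix m n ℝ} (hV : Vᵀ * V = 1)
    (A : Matrix m p ℝ) (i : p) : ∑ j, (Vᵀ * A) j i ^ 2 ≤ ∑ l, A l i ^ 2 := by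
  set N := A - V * (Vᵀ * A)
  have hN : Nᵀ * N = Aᵀ * A - (Vᵀ * A)ᵀ * (Vᵀ * A) := by
    have hVVV : Vᵀ * (V * (Vᵀ * A)) = Vᵀ * A := by rw [← Matrix.mul_assoc, hV, Matrix.one_mul]
    simp only [N, transpose_sub, transpose_mul, transpose_transpose, Matrix.sub_mul,
      Matrix.mul_sub, Matrix.mul_assoc, hVVV]
    abel
  have hdiag := transpose_mul_self_apply_self N i
  rw [hN, sub_apply, transpose_mul_self_apply_self, transpose_mul_self_apply_self] at hdiag
  have : 0 ≤ ∑ l, N l i ^ 2 := by positivity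
  linarith

theorem isDoublySubstochastic_map_sq_transpose_mul {G : Matrix m n ℝ} {V : Matrix m p ℝ}
    [Fintype p] [DecidableEq n] [DecidableEq p] (hG : Gᵀ * G = 1) (hV : Vᵀ * V = 1) :
    ((Gᵀ * V).map (· ^ 2)).IsDoublySubstochastic where
  nonneg i j := sq_nonneg _
  sum_row_le_one i := by
    have h := sum_sq_transpose_mul_apply_le hV G i
    rw [← transpose_mul_self_apply_self G i, hG, one_apply_eq] at h
    rw [← transpose_transpose (Gᵀ * V), transpose_mul, transpose_transpose]
    exact h
  sum_col_le_one j := by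
    have h := sum_sq_transpose_mul_apply_le hG V j
    rwa [← transpose_mul_self_apply_self V j, hV, one_apply_eq] at h

theorem trace_transpose_mul_diagonal_mul_mul_diagonal {R : Type*} [CommSemiring R]
    [DecidableEq m] [DecidableEq n] (M : Matrix m n R) (s : m → R) (d : n → R) :
    trace (Mᵀ * diagonal s * M * diagonal d) = ∑ i, ∑ j, s i * d j * M i j ^ 2 := by
  simp only [trace, diag_apply, mul_diagonal, mul_apply (N := M), transpose_apply, sum_mul]
  rw [sum_comm]
  exact sum_congr rfl fun i _ => sum_congr rfl fun j _ => by ring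

end Matrix

/-- Key lemma for the RSVD subspace result: for orthonormal-column G and V⊥,
    diagonal Σ (nonneg, nonincreasing) and diagonal D (nonneg, matching order),
    Tr(V⊥ᵀ G Σ² Gᵀ V⊥ D) ≤ Tr(Σ² D), with equality when V⊥ = G. -/
theorem rsvd_subspace_trace_bound {m k : ℕ}
    (G : Matrix (Fin m) (Fin k) ℝ) (hG : Gᵀ * G = 1)
    (σ d : Fin k → ℝ) (hσ : ∀ i, 0 ≤ σ i) (hd : ∀ i, 0 ≤ d i)
    (hσmono : Antitone σ) (hdmono : Antitone d) :
    (∀ Vp : Matrix (Fin m) (Fin k) ℝ, Vpᵀ * Vp = 1 →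
      Matrix.trace (Vpᵀ * G * Matrix.diagonal (fun i => (σ i)^2) * Gᵀ * Vp *
          Matrix.diagonal d)
        ≤ Matrix.trace (Matrix.diagonal (fun i => (σ i)^2) * Matrix.diagonal d)) ∧
    Matrix.trace (Gᵀ * G * Matrix.diagonal (fun i => (σ i)^2) * Gᵀ * G *
        Matrix.diagonal d)
      = Matrix.trace (Matrix.diagonal (fun i => (σ i)^2) * Matrix.diagonal d) := by
  have hσsq : Antitone fun i => σ i ^ 2 := fun i j hij => pow_le_pow_left₀ (hσ j) (hσmono hij) 2
  refine ⟨fun Vp hVp => ?_, ?_⟩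
  · have hreassoc : Vpᵀ * G * diagonal (fun i => σ i ^ 2) * Gᵀ * Vp * diagonal d
        = (Gᵀ * Vp)ᵀ * diagonal (fun i => σ i ^ 2) * (Gᵀ * Vp) * diagonal d := by
      simp only [transpose_mul, transpose_transpose, Matrix.mul_assoc]
    rw [hreassoc, trace_transpose_mul_diagonal_mul_mul_diagonal, diagonal_mul_diagonal,
      trace_diagonal]
    exact (isDoublySubstochastic_map_sq_transpose_mul hG hVp).sum_mul_mul_le hσsq
      (fun i => sq_nonneg _) hdmono hd
  · rw [hG, Matrix.one_mul, Matrix.mul_assoc _ Gᵀ G, hG, Matrix.mul_one]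
end

section
/- For fixed reals σ ≥ 0 and λ > 0, the function f(ω) = −σ²ω²/(ω² + λ) + λω² defined for ω ≥ 0 attains its minimum at ω* = √(max(σ − λ, 0)), i.e., ω*² = (σ − λ)₊. -/
/-- The per-singular-value objective f(ω) = −σ²ω²/(ω²+λ) + λω², ω ≥ 0, attains
    its minimum at ω* = √((σ−λ)₊), and ω*² = (σ−λ)₊. -/
theorem rsvd_scalar_minimizer (σ lam : ℝ) (hσ : 0 ≤ σ) (hlam : 0 < lam)
    (f : ℝ → ℝ) (hf : ∀ ω, f ω = -(σ^2 * ω^2) / (ω^2 + lam) + lam * ω^2)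
    (ωs : ℝ) (hωs : ωs = Real.sqrt (max (σ - lam) 0)) :
    (∀ ω, 0 ≤ ω → f ωs ≤ f ω) ∧ ωs^2 = max (σ - lam) 0 := by
  have hsq : ωs ^ 2 = max (σ - lam) 0 := by
    rw [hωs, Real.sq_sqrt (le_max_right _ _)]
  refine ⟨fun ω _ => ?_, hsq⟩
  have key : ∀ x : ℝ, f x = (lam * x^2 * (x^2 + lam) - σ^2 * x^2) / (x^2 + lam) := by
    intro x
    have hx : x^2 + lam ≠ 0 := by positivity
    rw [hf]; field_simp; ring
  have hA : (0:ℝ) < ω^2 + lam := by positivity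
  have hB : (0:ℝ) < ωs^2 + lam := by positivity
  rw [key, key, div_le_div_iff₀ hB hA]
  rcases le_or_gt σ lam with h | h
  · have hm : max (σ - lam) 0 = 0 := max_eq_right (by linarith)
    rw [hm] at hsq
    rw [hsq]
    nlinarith [sq_nonneg ω, sq_nonneg (ω^2), mul_nonneg (sq_nonneg ω) (sq_nonneg ω), mul_le_mul_of_nonneg_right (mul_self_le_mul_self hσ h) (sq_nonneg ω)]
  · have hm : max (σ - lam) 0 = σ - lam := max_eq_left (by linarith)
    rw [hm] at hsq
    rw [hsq]
    nlinarith [sq_nonneg (ω^2 - (σ - lam)), mul_nonneg (le_of_lt hlam) (sq_nonneg (ω^2 - (σ - lam)))]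
end

section
/- Let σ ≥ 0 and λ > 0. If σ > λ then the minimizer ω* = √(σ−λ) of f(ω) = −σ²ω²/(ω²+λ) + λω² satisfies f(ω*) = −(σ−λ)² < 0 = f(0); if σ ≤ λ then the minimizer is ω* = 0. -/
/-- If σ > λ then the minimizer ω* = √(σ−λ) of f satisfies
    f(ω*) = −(σ−λ)² < 0 = f(0); if σ ≤ λ then the minimizer is ω* = 0. -/
theorem rsvd_scalar_minimizer_cases (σ lam : ℝ) (hσ : 0 ≤ σ) (hlam : 0 < lam)
    (f : ℝ → ℝ) (hf : ∀ ω, f ω = -(σ^2 * ω^2) / (ω^2 + lam) + lam * ω^2) :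
    (σ > lam →
      (∀ ω, 0 ≤ ω → f (Real.sqrt (σ - lam)) ≤ f ω) ∧
      f (Real.sqrt (σ - lam)) = -(σ - lam)^2 ∧
      -(σ - lam)^2 < 0 ∧ f 0 = 0) ∧
    (σ ≤ lam → ∀ ω, 0 ≤ ω → f 0 ≤ f ω) := by
  have hf0 : f 0 = 0 := by rw [hf]; norm_num
  constructor
  · intro hgt
    have hsl : 0 ≤ σ - lam := le_of_lt (by linarith)
    have hsq : (Real.sqrt (σ - lam))^2 = σ - lam := Real.sq_sqrt hsl
    have hval : f (Real.sqrt (σ - lam)) = -(σ - lam)^2 := by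
      rw [hf, hsq]
      have : σ - lam + lam = σ := by ring
      rw [this]
      have hσ' : σ ≠ 0 := by intro h; simp [h] at hgt; linarith
      field_simp
      ring
    refine ⟨?_, hval, by nlinarith, hf0⟩
    intro ω _
    rw [hval, hf]
    have hden : 0 < ω^2 + lam := by positivity
    rw [div_add' _ _ _ (ne_of_gt hden), le_div_iff₀ hden]
    nlinarith [sq_nonneg (ω^2 + lam - σ), hden]
  · intro hle ω _
    rw [hf0, hf]
    have hden : 0 < ω^2 + lam := by positivity
    rw [div_add' _ _ _ (ne_of_gt hden), le_div_iff₀ hden]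
    have h2 : (0:ℝ) ≤ lam * ω^2 + lam^2 - σ^2 := by nlinarith [sq_nonneg ω]
    nlinarith [mul_nonneg (sq_nonneg ω) h2]
end

section
/- With X = FΣGᵀ a thin SVD (FᵀF = GᵀG = I_r, Σ = diag(σ₁,...,σ_r) with σᵢ > 0), for any diagonal Ω = diag(ω₁,...,ω_k) with ωᵢ ≥ 0, k ≤ r, and V = G_kΩ, the RSVD reduced objective satisfies J(V) = Tr(Σ²) − Σᵢ₌₁ᵏ σᵢ²ωᵢ²/(ωᵢ²+λ) + λΣᵢ₌₁ᵏ ωᵢ². -/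
open Matrix BigOperators

/-- With X = FΣGᵀ a thin SVD and V = G_kΩ (Ω diagonal, nonnegative), the reduced
    RSVD objective satisfies
    J(V) = Tr(Σ²) − Σᵢ σᵢ²ωᵢ²/(ωᵢ²+λ) + λΣᵢ ωᵢ². -/
theorem rsvd_objective_on_subspace {n m r k : ℕ} (hk : k ≤ r)
    (X : Matrix (Fin n) (Fin m) ℝ)
    (F : Matrix (Fin n) (Fin r) ℝ) (G : Matrix (Fin m) (Fin r) ℝ)
    (σ : Fin r → ℝ) (hσpos : ∀ i, 0 < σ i)
    (hF : Fᵀ * F = 1) (hG : Gᵀ * G = 1)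
    (hX : X = F * Matrix.diagonal σ * Gᵀ)
    (lam : ℝ) (hlam : 0 < lam)
    (ω : Fin k → ℝ) (hω : ∀ i, 0 ≤ ω i)
    (Gk : Matrix (Fin m) (Fin k) ℝ) (hGk : Gk = G.submatrix id (Fin.castLE hk))
    (V : Matrix (Fin m) (Fin k) ℝ) (hV : V = Gk * Matrix.diagonal ω) :
    Matrix.trace (Xᵀ * X -
        Xᵀ * X * V * (Vᵀ * V + lam • (1 : Matrix (Fin k) (Fin k) ℝ))⁻¹ * Vᵀ)
      + Matrix.trace (lam • (Vᵀ * V)) =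
      (∑ i, (σ i)^2)
        - ∑ i : Fin k, (σ (Fin.castLE hk i))^2 * (ω i)^2 / ((ω i)^2 + lam)
        + lam * ∑ i : Fin k, (ω i)^2 := by
  subst hX hGk hV
  set c := Fin.castLE hk with hc
  set Gk := G.submatrix id c with hGk
  -- Gkᵀ * Gk = 1
  have hGkGk : Gkᵀ * Gk = 1 := by
    ext i j
    have h1 := congrFun (congrFun hG (c i)) (c j)
    simp only [Matrix.mul_apply, Matrix.transpose_apply, Matrix.one_apply] at h1 ⊢
    simpa [hGk, Matrix.submatrix_apply, Fin.castLE_inj, c] using h1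
  -- key structural lemma
  have key : ∀ s : Fin r → ℝ,
      Gkᵀ * G * Matrix.diagonal s * Gᵀ * Gk
        = Matrix.diagonal (fun i => s (c i)) := by
    intro s
    have hA : Gᵀ * Gk = Matrix.of fun i j => if i = c j then (1:ℝ) else 0 := by
      ext i j
      have h1 := congrFun (congrFun hG i) (c j)
      simp only [Matrix.mul_apply, Matrix.transpose_apply, Matrix.one_apply] at h1 ⊢
      simpa [hGk, Matrix.submatrix_apply] using h1
    have h2 : Gkᵀ * G * Matrix.diagonal s * Gᵀ * Gk
        = (Gᵀ * Gk)ᵀ * Matrix.diagonal s * (Gᵀ * Gk) := by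
      simp only [Matrix.transpose_mul, Matrix.transpose_transpose, Matrix.mul_assoc]
    rw [h2, hA]
    ext a b
    simp only [Matrix.mul_apply, Matrix.transpose_apply, Matrix.of_apply,
      Matrix.diagonal_apply, Matrix.mul_apply]
    simp only [ite_mul, mul_ite, one_mul, mul_one, zero_mul, mul_zero,
      Finset.sum_ite_eq, Finset.mem_univ, if_true]
    simp only [Fin.castLE_inj, c]
    rcases eq_or_ne a b with h | h
    · simp [h]
    · simp [h, Ne.symm h]
  -- Vᵀ V
  have hVV : (Gk * Matrix.diagonal ω)ᵀ * (Gk * Matrix.diagonal ω)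
      = Matrix.diagonal (fun i => ω i * ω i) := by
    rw [Matrix.transpose_mul, Matrix.diagonal_transpose, Matrix.mul_assoc,
      ← Matrix.mul_assoc Gkᵀ, hGkGk, Matrix.one_mul, Matrix.diagonal_mul_diagonal]
  -- the inverse matrix
  have hne : ∀ i : Fin k, ω i * ω i + lam ≠ 0 := fun i =>
    ne_of_gt (by nlinarith [mul_self_nonneg (ω i)])
  have hM : (Gk * Matrix.diagonal ω)ᵀ * (Gk * Matrix.diagonal ω)
      + lam • (1 : Matrix (Fin k) (Fin k) ℝ)
      = Matrix.diagonal (fun i => ω i * ω i + lam) := by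
    rw [hVV]
    ext a b
    by_cases h : a = b <;> simp [Matrix.diagonal_apply, Matrix.one_apply, h]
  have hMinv : (Matrix.diagonal (fun i => ω i * ω i + lam))⁻¹
      = Matrix.diagonal (fun i => (ω i * ω i + lam)⁻¹) := by
    apply Matrix.inv_eq_right_inv
    rw [Matrix.diagonal_mul_diagonal]
    ext a b
    by_cases h : a = b <;>
      simp [Matrix.diagonal_apply, Matrix.one_apply, h, mul_inv_cancel₀ (hne _)]
  -- Xᵀ X
  have hXX : (F * Matrix.diagonal σ * Gᵀ)ᵀ * (F * Matrix.diagonal σ * Gᵀ)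
      = G * Matrix.diagonal (fun i => σ i * σ i) * Gᵀ := by
    have step1 : (F * Matrix.diagonal σ * Gᵀ)ᵀ * (F * Matrix.diagonal σ * Gᵀ)
        = G * Matrix.diagonal σ * (Fᵀ * F) * Matrix.diagonal σ * Gᵀ := by
      simp only [Matrix.transpose_mul, Matrix.transpose_transpose,
        Matrix.diagonal_transpose, Matrix.mul_assoc]
    rw [step1, hF, Matrix.mul_one, Matrix.mul_assoc G, Matrix.diagonal_mul_diagonal]
  -- trace of XᵀX
  have htr1 : Matrix.trace ((F * Matrix.diagonal σ * Gᵀ)ᵀ * (F * Matrix.diagonal σ * Gᵀ))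
      = ∑ i, (σ i)^2 := by
    rw [hXX, Matrix.trace_mul_cycle, hG, Matrix.one_mul, Matrix.trace_diagonal]
    exact Finset.sum_congr rfl fun i _ => (pow_two (σ i)).symm
  -- trace of big term
  have htr2 : Matrix.trace ((F * Matrix.diagonal σ * Gᵀ)ᵀ * (F * Matrix.diagonal σ * Gᵀ)
        * (Gk * Matrix.diagonal ω)
        * ((Gk * Matrix.diagonal ω)ᵀ * (Gk * Matrix.diagonal ω)
            + lam • (1 : Matrix (Fin k) (Fin k) ℝ))⁻¹
        * (Gk * Matrix.diagonal ω)ᵀ)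
      = ∑ i : Fin k, (σ (c i))^2 * (ω i)^2 / ((ω i)^2 + lam) := by
    rw [hXX, hM, hMinv, Matrix.transpose_mul, Matrix.diagonal_transpose]
    rw [show G * Matrix.diagonal (fun i => σ i * σ i) * Gᵀ * (Gk * Matrix.diagonal ω)
          * Matrix.diagonal (fun i => (ω i * ω i + lam)⁻¹)
          * (Matrix.diagonal ω * Gkᵀ)
        = (G * Matrix.diagonal (fun i => σ i * σ i) * Gᵀ * Gk * Matrix.diagonal ω
            * Matrix.diagonal (fun i => (ω i * ω i + lam)⁻¹) * Matrix.diagonal ω) * Gkᵀ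
        by simp only [Matrix.mul_assoc]]
    rw [Matrix.trace_mul_comm]
    rw [show Gkᵀ * (G * Matrix.diagonal (fun i => σ i * σ i) * Gᵀ * Gk * Matrix.diagonal ω
            * Matrix.diagonal (fun i => (ω i * ω i + lam)⁻¹) * Matrix.diagonal ω)
        = Gkᵀ * G * Matrix.diagonal (fun i => σ i * σ i) * Gᵀ * Gk * Matrix.diagonal ω
            * Matrix.diagonal (fun i => (ω i * ω i + lam)⁻¹) * Matrix.diagonal ω
        by simp only [Matrix.mul_assoc]]
    rw [key, Matrix.diagonal_mul_diagonal, Matrix.diagonal_mul_diagonal,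
      Matrix.diagonal_mul_diagonal, Matrix.trace_diagonal]
    refine Finset.sum_congr rfl fun i _ => ?_
    have h := hne i
    field_simp
  -- trace of regularization term
  have htr3 : Matrix.trace (lam • ((Gk * Matrix.diagonal ω)ᵀ * (Gk * Matrix.diagonal ω)))
      = lam * ∑ i : Fin k, (ω i)^2 := by
    rw [hVV, Matrix.trace_smul, Matrix.trace_diagonal, smul_eq_mul]
    rw [Finset.mul_sum, Finset.mul_sum]
    exact Finset.sum_congr rfl fun i _ => by ring
  rw [Matrix.trace_sub, htr1, htr2, htr3]
end

section
/- For X ∈ ℝ^{n×m} with singular values σ₁ ≥ ... ≥ σ_r > 0 (r = rank X), λ > 0, and k ≤ r, the global minimum value of J(U,V) = ‖X − UVᵀ‖²_F + λ‖U‖²_F + λ‖V‖²_F over U ∈ ℝ^{n×k}, V ∈ ℝ^{m×k} equals Σ_{i>k} σᵢ² + Σ_{i=1}^{k} [σᵢ² − (σᵢ−λ)₊²]. -/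
/-!
Compressing by the orthonormal factors `F`, `G` reduces the problem to `X = Σ = diag σ`, and
rotating `U` and `V` by a common orthogonal matrix (which changes neither `U Vᵀ` nor the norms)
makes the columns `b_j` of `Gᵀ V` orthogonal. The objective then splits over the column pairs
`(a_j, b_j)`: by Cauchy–Schwarz and optimizing over the norms of `a_j` and `b_j`, column `j`
lowers `‖Σ‖²` by at most `(‖Σ u_j‖ - λ)₊²` for the unit vector `u_j` along `b_j`, and convexity
of `s ↦ (√s - λ)₊²` bounds this by `∑ᵢ wᵢⱼ (σᵢ - λ)₊²` with `wᵢⱼ = uᵢⱼ²`. The matrix `w` is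
doubly substochastic (its row sums are diagonal entries of the orthogonal projection onto the
column space of `Gᵀ V`), so the total is at most the sum of the `k` largest `(σᵢ - λ)₊²`.
Soft-thresholding the top `k` singular values attains the bound.
-/

open Matrix BigOperators

noncomputable def frobSq {n m : ℕ} (A : Matrix (Fin n) (Fin m) ℝ) : ℝ :=
  ∑ i, ∑ j, (A i j)^2

lemma frobSq_nonneg {n m : ℕ} (A : Matrix (Fin n) (Fin m) ℝ) : 0 ≤ frobSq A :=
  Finset.sum_nonneg fun _ _ => Finset.sum_nonneg fun _ _ => sq_nonneg _

lemma frobSq_transpose {n m : ℕ} (A : Matrix (Fin n) (Fin m) ℝ) : frobSq Aᵀ = frobSq A :=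
  Finset.sum_comm

lemma frobSq_eq_trace {n m : ℕ} (A : Matrix (Fin n) (Fin m) ℝ) :
    frobSq A = trace (Aᵀ * A) := by
  rw [← frobSq_transpose]
  simp only [frobSq, trace, diag, mul_apply, transpose_apply, sq]

lemma frobSq_diagonal {n : ℕ} (d : Fin n → ℝ) : frobSq (diagonal d) = ∑ i, d i ^ 2 := by
  simp [frobSq, diagonal_apply, ite_pow]

lemma frobSq_sub {n m : ℕ} (A B : Matrix (Fin n) (Fin m) ℝ) :
    frobSq (A - B) = frobSq A - 2 * ∑ i, ∑ j, A i j * B i j + frobSq B := by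
  simp only [frobSq, Matrix.sub_apply, Finset.mul_sum, ← Finset.sum_sub_distrib,
    ← Finset.sum_add_distrib]
  exact Finset.sum_congr rfl fun _ _ => Finset.sum_congr rfl fun _ _ => by ring

lemma frobSq_mul_of_transpose_mul_self {n r m : ℕ} {F : Matrix (Fin n) (Fin r) ℝ}
    (hF : Fᵀ * F = 1) (N : Matrix (Fin r) (Fin m) ℝ) : frobSq (F * N) = frobSq N := by
  rw [frobSq_eq_trace, frobSq_eq_trace, transpose_mul, Matrix.mul_assoc,
    ← Matrix.mul_assoc Fᵀ, hF, Matrix.one_mul]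

lemma frobSq_mul_of_mul_transpose_self {n r m : ℕ} {Q : Matrix (Fin r) (Fin m) ℝ}
    (hQ : Q * Qᵀ = 1) (M : Matrix (Fin n) (Fin r) ℝ) : frobSq (M * Q) = frobSq M := by
  rw [← frobSq_transpose, transpose_mul,
    frobSq_mul_of_transpose_mul_self (by rwa [transpose_transpose]), frobSq_transpose]

lemma frobSq_transpose_mul_le {n r m : ℕ} {F : Matrix (Fin n) (Fin r) ℝ}
    (hF : Fᵀ * F = 1) (M : Matrix (Fin n) (Fin m) ℝ) : frobSq (Fᵀ * M) ≤ frobSq M := by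
  set N := Fᵀ * M
  have hpythagoras : (M - F * N)ᵀ * (M - F * N) = Mᵀ * M - Nᵀ * N := by
    have hNt : Mᵀ * F = Nᵀ := by rw [transpose_mul, transpose_transpose]
    simp only [transpose_sub, transpose_mul, Matrix.sub_mul, Matrix.mul_sub, ← Matrix.mul_assoc,
      hNt]
    rw [Matrix.mul_assoc Nᵀ Fᵀ F, hF, Matrix.mul_one, Matrix.mul_assoc Nᵀ Fᵀ M]
    abel
  have := frobSq_nonneg (M - F * N)
  rw [frobSq_eq_trace, hpythagoras, trace_sub, ← frobSq_eq_trace, ← frobSq_eq_trace] at this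
  linarith

lemma frobSq_mul_le {n r m : ℕ} {G : Matrix (Fin m) (Fin r) ℝ}
    (hG : Gᵀ * G = 1) (M : Matrix (Fin n) (Fin m) ℝ) : frobSq (M * G) ≤ frobSq M := by
  rw [← frobSq_transpose, transpose_mul, ← frobSq_transpose M]
  exact frobSq_transpose_mul_le hG Mᵀ

lemma sum_castLE_eq_sum_ite {r k : ℕ} (hk : k ≤ r) (f : Fin r → ℝ) :
    ∑ j : Fin k, f (Fin.castLE hk j) = ∑ i : Fin r, if (i : ℕ) < k then f i else 0 := by
  have himage : Finset.univ.map (Fin.castLEEmb hk) =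
      Finset.univ.filter fun i : Fin r => (i : ℕ) < k := by
    ext i
    simp only [Finset.mem_map, Finset.mem_univ, true_and, Finset.mem_filter, Fin.castLEEmb_apply]
    exact ⟨by rintro ⟨j, rfl⟩; exact j.isLt, fun h => ⟨⟨i, h⟩, rfl⟩⟩
  rw [← Finset.sum_filter, ← himage, Finset.sum_map]
  rfl

lemma two_mul_sub_le_sq_max_sub {P X μ t lam : ℝ} (hX : 0 ≤ X) (hμ : 0 ≤ μ) (ht : 0 ≤ t)
    (hlam : 0 < lam) (hP : P ^ 2 ≤ X * μ * t ^ 2) :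
    2 * P - (μ + lam) * X - lam * μ ≤ max (t - lam) 0 ^ 2 := by
  have hquad : (μ + lam) * (2 * P - (μ + lam) * X) ≤ μ * t ^ 2 := by
    rcases hX.eq_or_lt with rfl | hX
    · obtain rfl : P = 0 := by simpa using hP
      nlinarith
    · nlinarith [sq_nonneg (P - (μ + lam) * X)]
  refine le_of_mul_le_mul_left ?_ (by positivity : 0 < μ + lam)
  rcases le_total t lam with h | h
  · rw [max_eq_right (by linarith)]
    nlinarith [mul_nonneg hμ (mul_nonneg (sub_nonneg.2 h) (add_nonneg ht hlam.le)),
      mul_nonneg hlam.le (mul_nonneg hμ hμ)]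
  · rw [max_eq_left (by linarith)]
    nlinarith [sq_nonneg (t - μ - lam)]

-- The supporting line of the convex map `s ↦ (√s - λ)₊²` at `s = t²`, scaled by `t`.
lemma tangent_le_sq_max_sub {x t lam : ℝ} (hx : 0 ≤ x) (hlam : 0 ≤ lam) (ht : lam ≤ t) :
    (t - lam) * x ^ 2 - lam * t * (t - lam) ≤ t * max (x - lam) 0 ^ 2 := by
  rcases le_total x lam with h | h
  · rw [max_eq_right (by linarith)]
    nlinarith [mul_nonneg (sub_nonneg.2 ht) (mul_nonneg (sub_nonneg.2 h) (add_nonneg hx hlam)),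
      mul_nonneg (sub_nonneg.2 ht) (mul_nonneg hlam (sub_nonneg.2 ht))]
  · rw [max_eq_left (by linarith)]
    nlinarith [mul_nonneg hlam (sq_nonneg (x - t))]

lemma sq_max_sub_le_sum_mul {ι : Type*} [Fintype ι] {w x : ι → ℝ} {t lam : ℝ}
    (hw : ∀ i, 0 ≤ w i) (hw1 : ∑ i, w i ≤ 1) (hx : ∀ i, 0 ≤ x i) (hlam : 0 ≤ lam)
    (ht : t ^ 2 = ∑ i, w i * x i ^ 2) :
    max (t - lam) 0 ^ 2 ≤ ∑ i, w i * max (x i - lam) 0 ^ 2 := by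
  rcases le_or_gt t lam with h | h
  · rw [max_eq_right (by linarith)]
    simpa using Finset.sum_nonneg fun i _ => mul_nonneg (hw i) (sq_nonneg (max (x i - lam) 0))
  rw [max_eq_left (by linarith)]
  have htpos : 0 < t := hlam.trans_lt h
  refine le_of_mul_le_mul_left ?_ htpos
  calc t * (t - lam) ^ 2 ≤ ∑ i, w i * ((t - lam) * x i ^ 2 - lam * t * (t - lam)) := by
        have hsum : ∑ i, w i * ((t - lam) * x i ^ 2 - lam * t * (t - lam)) =
            (t - lam) * t ^ 2 - lam * t * (t - lam) * ∑ i, w i := by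
          rw [ht, Finset.mul_sum, Finset.mul_sum, ← Finset.sum_sub_distrib]
          exact Finset.sum_congr rfl fun i _ => by ring
        rw [hsum]
        nlinarith [mul_le_mul_of_nonneg_left hw1
          (by positivity : 0 ≤ lam * t * (t - lam))]
    _ ≤ ∑ i, w i * (t * max (x i - lam) 0 ^ 2) :=
        Finset.sum_le_sum fun i _ =>
          mul_le_mul_of_nonneg_left (tangent_le_sq_max_sub (hx i) hlam h.le) (hw i)
    _ = t * ∑ i, w i * max (x i - lam) 0 ^ 2 := by
        rw [Finset.mul_sum]
        exact Finset.sum_congr rfl fun i _ => by ring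

lemma sum_mul_le_sum_castLE {r k : ℕ} (hk : k ≤ r) {c R : Fin r → ℝ} (hc : Antitone c)
    (hc0 : ∀ i, 0 ≤ c i) (hR0 : ∀ i, 0 ≤ R i) (hR1 : ∀ i, R i ≤ 1) (hR : ∑ i, R i ≤ k) :
    ∑ i, R i * c i ≤ ∑ j : Fin k, c (Fin.castLE hk j) := by
  obtain ⟨θ, hθ0, hθtop, hθbot⟩ : ∃ θ, 0 ≤ θ ∧ (∀ i : Fin r, (i : ℕ) < k → θ ≤ c i) ∧
      ∀ i : Fin r, k ≤ (i : ℕ) → c i ≤ θ := by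
    rcases lt_or_ge k r with hkr | hkr
    · exact ⟨c ⟨k, hkr⟩, hc0 _, fun i hi => hc (Fin.mk_le_of_le_val hi.le),
        fun i hi => hc (Fin.mk_le_of_le_val hi)⟩
    · exact ⟨0, le_rfl, fun i _ => hc0 i, fun i hi => absurd i.isLt (by omega)⟩
  have hpoint : ∀ i : Fin r, R i * c i ≤
      (if (i : ℕ) < k then c i else 0) + (R i - if (i : ℕ) < k then 1 else 0) * θ := by
    intro i
    split_ifs with hi
    · nlinarith [mul_nonneg (sub_nonneg.2 (hR1 i)) (sub_nonneg.2 (hθtop i hi))]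
    · nlinarith [mul_nonneg (hR0 i) (sub_nonneg.2 (hθbot i (not_lt.1 hi)))]
  have hcount : ∑ i : Fin r, (if (i : ℕ) < k then (1 : ℝ) else 0) = k := by
    rw [← sum_castLE_eq_sum_ite hk fun _ => 1]
    simp
  calc ∑ i, R i * c i
      ≤ ∑ i : Fin r, ((if (i : ℕ) < k then c i else 0) +
          (R i - if (i : ℕ) < k then 1 else 0) * θ) := Finset.sum_le_sum fun i _ => hpoint i
    _ = ∑ j : Fin k, c (Fin.castLE hk j) + (∑ i, R i - k) * θ := by
      rw [Finset.sum_add_distrib, ← Finset.sum_mul, Finset.sum_sub_distrib, hcount,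
        sum_castLE_eq_sum_ite]
    _ ≤ ∑ j : Fin k, c (Fin.castLE hk j) := by
      nlinarith [mul_nonneg (sub_nonneg.2 hR) hθ0]

lemma diag_le_one_of_mul_self_eq {ι : Type*} [Fintype ι] {P : Matrix ι ι ℝ} (hsymm : Pᵀ = P)
    (hidem : P * P = P) (i : ι) : P i i ≤ 1 := by
  have hdiag : P i i = ∑ l, P i l ^ 2 := by
    conv_lhs => rw [← hidem]
    rw [mul_apply]
    exact Finset.sum_congr rfl fun l _ => by rw [sq, ← transpose_apply P l i, hsymm]
  have hsq : P i i ^ 2 ≤ P i i :=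
    hdiag ▸ Finset.single_le_sum (fun l _ => sq_nonneg (P i l)) (Finset.mem_univ i)
  nlinarith

lemma sum_sq_div_sum_sq_le_one_of_isDiag {r k : ℕ} {B : Matrix (Fin r) (Fin k) ℝ}
    (hB : (Bᵀ * B).IsDiag) (i : Fin r) : ∑ j, B i j ^ 2 / (∑ l, B l j ^ 2) ≤ 1 := by
  set μ : Fin k → ℝ := fun j => ∑ l, B l j ^ 2
  have hBB : Bᵀ * B = diagonal μ := by
    rw [← hB.diagonal_diag]
    congr 1
    ext j
    simp only [diag, mul_apply, transpose_apply, μ, sq]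
  set D := diagonal fun j => (μ j)⁻¹
  have hDμD : D * diagonal μ * D = D := by
    simp only [D, diagonal_mul_diagonal]
    congr 1
    funext j
    simpa using mul_inv_mul_cancel (μ j)⁻¹
  have hsymm : (B * D * Bᵀ)ᵀ = B * D * Bᵀ := by
    rw [transpose_mul, transpose_mul, transpose_transpose, diagonal_transpose, Matrix.mul_assoc]
  have hidem : B * D * Bᵀ * (B * D * Bᵀ) = B * D * Bᵀ := by
    calc B * D * Bᵀ * (B * D * Bᵀ) = B * (D * (Bᵀ * B) * D) * Bᵀ := by
          simp only [Matrix.mul_assoc]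
      _ = B * D * Bᵀ := by rw [hBB, hDμD]
  convert diag_le_one_of_mul_self_eq hsymm hidem i using 1
  rw [mul_apply]
  exact Finset.sum_congr rfl fun j _ => by simp only [D, mul_diagonal, transpose_apply]; ring

lemma column_gain_le {ι : Type*} [Fintype ι] {σ : ι → ℝ} (hσ : ∀ i, 0 ≤ σ i) {lam : ℝ}
    (hlam : 0 < lam) (a b : ι → ℝ) :
    2 * ∑ i, a i * σ i * b i - (∑ i, b i ^ 2 + lam) * ∑ i, a i ^ 2 - lam * ∑ i, b i ^ 2 ≤
      ∑ i, b i ^ 2 / (∑ l, b l ^ 2) * max (σ i - lam) 0 ^ 2 := by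
  generalize hμdef : ∑ l, b l ^ 2 = μ
  set w : ι → ℝ := fun i => b i ^ 2 / μ
  have hμ : 0 ≤ μ := hμdef ▸ Finset.sum_nonneg fun l _ => sq_nonneg (b l)
  have hw0 : ∀ i, 0 ≤ w i := fun i => div_nonneg (sq_nonneg _) hμ
  have hw1 : ∑ i, w i ≤ 1 := by
    simp only [w, ← Finset.sum_div, hμdef]
    exact div_self_le_one μ
  have hμw : ∀ i, μ * w i = b i ^ 2 := by
    intro i
    rcases hμ.eq_or_lt with hμ0 | hμ0
    · have : b i ^ 2 ≤ μ :=
        hμdef ▸ Finset.single_le_sum (fun l _ => sq_nonneg (b l)) (Finset.mem_univ i)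
      simp only [w, ← hμ0]
      nlinarith [sq_nonneg (b i)]
    · exact mul_div_cancel₀ _ hμ0.ne'
  set t := √(∑ i, w i * σ i ^ 2)
  have ht : t ^ 2 = ∑ i, w i * σ i ^ 2 :=
    Real.sq_sqrt (Finset.sum_nonneg fun i _ => mul_nonneg (hw0 i) (sq_nonneg _))
  have hcauchy : (∑ i, a i * σ i * b i) ^ 2 ≤ (∑ i, a i ^ 2) * μ * t ^ 2 := by
    have hμt : μ * t ^ 2 = ∑ i, (σ i * b i) ^ 2 := by
      rw [ht, Finset.mul_sum]
      exact Finset.sum_congr rfl fun i _ => by rw [← mul_assoc, hμw]; ring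
    rw [mul_assoc, hμt]
    simpa only [mul_assoc] using Finset.sum_mul_sq_le_sq_mul_sq Finset.univ a fun i => σ i * b i
  calc _ ≤ max (t - lam) 0 ^ 2 :=
        two_mul_sub_le_sq_max_sub (Finset.sum_nonneg fun i _ => sq_nonneg (a i)) hμ
          (Real.sqrt_nonneg _) hlam hcauchy
    _ ≤ ∑ i, w i * max (σ i - lam) 0 ^ 2 := sq_max_sub_le_sum_mul hw0 hw1 hσ hlam.le ht

noncomputable def penalizedError {n m k : ℕ} (lam : ℝ) (M : Matrix (Fin n) (Fin m) ℝ)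
    (U : Matrix (Fin n) (Fin k) ℝ) (V : Matrix (Fin m) (Fin k) ℝ) : ℝ :=
  frobSq (M - U * Vᵀ) + lam * frobSq U + lam * frobSq V

lemma frobSq_mul_transpose_of_isDiag {n r k : ℕ} (A : Matrix (Fin n) (Fin k) ℝ)
    {B : Matrix (Fin r) (Fin k) ℝ} (hB : (Bᵀ * B).IsDiag) :
    frobSq (A * Bᵀ) = ∑ j, (∑ l, B l j ^ 2) * ∑ i, A i j ^ 2 := by
  have htrace : frobSq (A * Bᵀ) = trace ((Bᵀ * B) * (Aᵀ * A)) := by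
    rw [frobSq_eq_trace, transpose_mul, transpose_transpose, Matrix.mul_assoc, trace_mul_comm]
    simp only [Matrix.mul_assoc]
    rw [← Matrix.mul_assoc Aᵀ, trace_mul_comm, Matrix.mul_assoc]
  rw [htrace, ← hB.diagonal_diag]
  simp only [trace, diag_apply, diagonal_mul]
  simp only [mul_apply, transpose_apply, sq]

lemma penalizedError_diagonal_of_isDiag {r k : ℕ} (σ : Fin r → ℝ) (lam : ℝ)
    (A : Matrix (Fin r) (Fin k) ℝ) {B : Matrix (Fin r) (Fin k) ℝ} (hB : (Bᵀ * B).IsDiag) :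
    penalizedError lam (diagonal σ) A B =
      ∑ i, σ i ^ 2 - ∑ j, (2 * ∑ i, A i j * σ i * B i j -
        (∑ i, B i j ^ 2 + lam) * ∑ i, A i j ^ 2 - lam * ∑ i, B i j ^ 2) := by
  have hcross : ∑ i, ∑ i', diagonal σ i i' * (A * Bᵀ) i i' =
      ∑ j, ∑ i, A i j * σ i * B i j := by
    simp only [diagonal_apply, ite_mul, zero_mul, Finset.sum_ite_eq, Finset.mem_univ, if_true]
    simp only [mul_apply, transpose_apply, Finset.mul_sum]
    rw [Finset.sum_comm]
    exact Finset.sum_congr rfl fun _ _ => Finset.sum_congr rfl fun _ _ => by ring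
  rw [penalizedError, frobSq_sub, frobSq_diagonal, hcross, frobSq_mul_transpose_of_isDiag A hB,
    ← frobSq_transpose A, ← frobSq_transpose B]
  simp only [frobSq, transpose_apply, Finset.sum_sub_distrib, add_mul, Finset.sum_add_distrib,
    ← Finset.mul_sum]
  ring

lemma le_penalizedError_diagonal_of_isDiag {r k : ℕ} (hk : k ≤ r) {σ : Fin r → ℝ}
    (hσ0 : ∀ i, 0 ≤ σ i) (hσ : Antitone σ) {lam : ℝ} (hlam : 0 < lam)
    (A B : Matrix (Fin r) (Fin k) ℝ) (hB : (Bᵀ * B).IsDiag) :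
    ∑ i, σ i ^ 2 - ∑ j : Fin k, max (σ (Fin.castLE hk j) - lam) 0 ^ 2 ≤
      penalizedError lam (diagonal σ) A B := by
  set C : Fin r → ℝ := fun i => max (σ i - lam) 0 ^ 2
  have hcols := Finset.sum_le_sum fun j (_ : j ∈ Finset.univ) =>
    column_gain_le hσ0 hlam (fun i => A i j) (fun i => B i j)
  have hrows : ∑ j, ∑ i, B i j ^ 2 / (∑ l, B l j ^ 2) * C i ≤
      ∑ j : Fin k, C (Fin.castLE hk j) := by
    rw [Finset.sum_comm]
    simp only [← Finset.sum_mul]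
    refine sum_mul_le_sum_castLE hk ?_ (fun i => sq_nonneg _)
      (fun i => Finset.sum_nonneg fun j _ => div_nonneg (sq_nonneg _)
        (Finset.sum_nonneg fun l _ => sq_nonneg _))
      (sum_sq_div_sum_sq_le_one_of_isDiag hB) ?_
    · exact fun i i' h => pow_le_pow_left₀ (le_max_right _ _)
        (max_le_max (sub_le_sub_right (hσ h) lam) le_rfl) 2
    · rw [Finset.sum_comm]
      calc ∑ j : Fin k, ∑ i, B i j ^ 2 / (∑ l, B l j ^ 2) ≤ ∑ j : Fin k, (1 : ℝ) :=
            Finset.sum_le_sum fun j _ => by rw [← Finset.sum_div]; exact div_self_le_one _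
        _ = k := by simp
  rw [penalizedError_diagonal_of_isDiag σ lam A hB]
  linarith

lemma Matrix.IsHermitian.exists_orthogonal_isDiag_conj {ι : Type*} [Fintype ι] [DecidableEq ι]
    {S : Matrix ι ι ℝ} (hS : S.IsHermitian) :
    ∃ Q : Matrix ι ι ℝ, Q * Qᵀ = 1 ∧ (Qᵀ * S * Q).IsDiag := by
  refine ⟨hS.eigenvectorUnitary, ?_, ?_⟩
  · have h := Unitary.coe_mul_star_self hS.eigenvectorUnitary
    rwa [Unitary.coe_star, star_eq_conjTranspose, conjTranspose_eq_transpose_of_trivial] at h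
  · have h := hS.conjStarAlgAut_star_eigenvectorUnitary
    rw [Unitary.conjStarAlgAut_star_apply, star_eq_conjTranspose,
      conjTranspose_eq_transpose_of_trivial] at h
    rw [h]
    exact isDiag_diagonal _

lemma le_penalizedError_diagonal {r k : ℕ} (hk : k ≤ r) {σ : Fin r → ℝ} (hσ0 : ∀ i, 0 ≤ σ i)
    (hσ : Antitone σ) {lam : ℝ} (hlam : 0 < lam) (A B : Matrix (Fin r) (Fin k) ℝ) :
    ∑ i, σ i ^ 2 - ∑ j : Fin k, max (σ (Fin.castLE hk j) - lam) 0 ^ 2 ≤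
      penalizedError lam (diagonal σ) A B := by
  have hBB : (Bᵀ * B).IsHermitian := by simpa using isHermitian_conjTranspose_mul_self B
  obtain ⟨Q, hQ, hdiag⟩ := hBB.exists_orthogonal_isDiag_conj
  have h := le_penalizedError_diagonal_of_isDiag hk hσ0 hσ hlam (A * Q) (B * Q)
    (by simpa only [transpose_mul, Matrix.mul_assoc] using hdiag)
  unfold penalizedError at h ⊢
  rwa [transpose_mul, Matrix.mul_assoc A, ← Matrix.mul_assoc Q, hQ, Matrix.one_mul,
    frobSq_mul_of_mul_transpose_self hQ, frobSq_mul_of_mul_transpose_self hQ] at h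

lemma exists_penalizedError_diagonal_eq {r k : ℕ} (hk : k ≤ r) (σ : Fin r → ℝ) (lam : ℝ) :
    ∃ E : Matrix (Fin r) (Fin k) ℝ,
      penalizedError lam (diagonal σ) E E =
        ∑ i, σ i ^ 2 - ∑ j : Fin k, max (σ (Fin.castLE hk j) - lam) 0 ^ 2 := by
  set D : Fin r → ℝ := fun i => max (σ i - lam) 0
  set d : Fin r → ℝ := fun i => if (i : ℕ) < k then D i else 0
  set E := (diagonal fun i => √(D i)).submatrix id (Fin.castLE hk)
  have hEE : E * Eᵀ = diagonal d := by
    ext i i'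
    rw [mul_apply]
    simp only [E, submatrix_apply, transpose_apply, id]
    rw [sum_castLE_eq_sum_ite hk fun l =>
      diagonal (fun i => √(D i)) i l * diagonal (fun i => √(D i)) i' l]
    by_cases h : i = i'
    · subst h
      rw [Finset.sum_eq_single i (fun l _ hl => by simp [diagonal_apply_ne _ (Ne.symm hl)])
        (by simp)]
      simp [d, Real.mul_self_sqrt (show 0 ≤ D i from le_max_right _ _)]
    · rw [diagonal_apply_ne _ h]
      refine Finset.sum_eq_zero fun l _ => ?_
      by_cases hl : i = l
      · simp [diagonal_apply_ne _ (hl ▸ h : l ≠ i').symm]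
      · simp [diagonal_apply_ne _ hl]
  have hE : frobSq E = ∑ i, d i := by
    rw [← frobSq_transpose, frobSq_eq_trace, transpose_transpose, hEE, trace_diagonal]
  refine ⟨E, ?_⟩
  rw [penalizedError, hEE, hE, diagonal_sub, frobSq_diagonal,
    sum_castLE_eq_sum_ite hk fun i => D i ^ 2, Finset.mul_sum, ← Finset.sum_add_distrib,
    ← Finset.sum_add_distrib, ← Finset.sum_sub_distrib]
  refine Finset.sum_congr rfl fun i _ => ?_
  simp only [d, D]
  split_ifs
  · rcases le_total (σ i) lam with h | h
    · rw [max_eq_right (by linarith)]; ring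
    · rw [max_eq_left (by linarith)]; ring
  · ring

lemma penalizedError_compress_le {n m r k : ℕ} {F : Matrix (Fin n) (Fin r) ℝ}
    {G : Matrix (Fin m) (Fin r) ℝ} (hF : Fᵀ * F = 1) (hG : Gᵀ * G = 1) {lam : ℝ} (hlam : 0 ≤ lam)
    (M : Matrix (Fin n) (Fin m) ℝ) (U : Matrix (Fin n) (Fin k) ℝ) (V : Matrix (Fin m) (Fin k) ℝ) :
    penalizedError lam (Fᵀ * M * G) (Fᵀ * U) (Gᵀ * V) ≤ penalizedError lam M U V := by
  have hcompress : Fᵀ * M * G - Fᵀ * U * (Gᵀ * V)ᵀ = Fᵀ * (M - U * Vᵀ) * G := by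
    simp only [transpose_mul, transpose_transpose, Matrix.mul_sub, Matrix.sub_mul,
      Matrix.mul_assoc]
  rw [penalizedError, penalizedError, hcompress]
  gcongr
  · exact (frobSq_mul_le hG _).trans (frobSq_transpose_mul_le hF _)
  · exact frobSq_transpose_mul_le hF U
  · exact frobSq_transpose_mul_le hG V

lemma penalizedError_mul_eq {n m r k : ℕ} {F : Matrix (Fin n) (Fin r) ℝ}
    {G : Matrix (Fin m) (Fin r) ℝ} (hF : Fᵀ * F = 1) (hG : Gᵀ * G = 1) (lam : ℝ)
    (N : Matrix (Fin r) (Fin r) ℝ) (E : Matrix (Fin r) (Fin k) ℝ) :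
    penalizedError lam (F * N * Gᵀ) (F * E) (G * E) = penalizedError lam N E E := by
  have hfactor : F * N * Gᵀ - F * E * (G * E)ᵀ = F * (N - E * Eᵀ) * Gᵀ := by
    simp only [transpose_mul, Matrix.mul_sub, Matrix.sub_mul, Matrix.mul_assoc]
  rw [penalizedError, penalizedError, hfactor, Matrix.mul_assoc,
    frobSq_mul_of_transpose_mul_self hF,
    frobSq_mul_of_mul_transpose_self (by rwa [transpose_transpose]),
    frobSq_mul_of_transpose_mul_self hF, frobSq_mul_of_transpose_mul_self hG]

/-- The global minimum of J(U,V) = ‖X−UVᵀ‖²_F + λ‖U‖²_F + λ‖V‖²_F equals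
    Σ_{i>k} σᵢ² + Σ_{i≤k}[σᵢ² − (σᵢ−λ)₊²]
      = Σᵢ σᵢ² − Σ_{i≤k} (σᵢ−λ)₊². -/
theorem rsvd_global_min_value {n m r k : ℕ} (hk : k ≤ r)
    (X : Matrix (Fin n) (Fin m) ℝ)
    (F : Matrix (Fin n) (Fin r) ℝ) (G : Matrix (Fin m) (Fin r) ℝ)
    (σ : Fin r → ℝ) (hσpos : ∀ i, 0 < σ i) (hσmono : Antitone σ)
    (hF : Fᵀ * F = 1) (hG : Gᵀ * G = 1)
    (hX : X = F * Matrix.diagonal σ * Gᵀ)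
    (lam : ℝ) (hlam : 0 < lam)
    (c : ℝ)
    (hc : c = (∑ i, (σ i)^2) - ∑ i : Fin k, (max (σ (Fin.castLE hk i) - lam) 0)^2) :
    (∀ (U : Matrix (Fin n) (Fin k) ℝ) (V : Matrix (Fin m) (Fin k) ℝ),
        c ≤ frobSq (X - U * Vᵀ) + lam * frobSq U + lam * frobSq V) ∧
    (∃ (U : Matrix (Fin n) (Fin k) ℝ) (V : Matrix (Fin m) (Fin k) ℝ),
        frobSq (X - U * Vᵀ) + lam * frobSq U + lam * frobSq V = c) := by
  subst hX hc
  refine ⟨fun U V => ?_, ?_⟩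
  · have hdiag : Fᵀ * (F * diagonal σ * Gᵀ) * G = diagonal σ := by
      simp only [← Matrix.mul_assoc, hF, Matrix.one_mul]
      rw [Matrix.mul_assoc _ Gᵀ, hG, Matrix.mul_one]
    calc _ ≤ penalizedError lam (diagonal σ) (Fᵀ * U) (Gᵀ * V) :=
          le_penalizedError_diagonal hk (fun i => (hσpos i).le) hσmono hlam _ _
      _ = penalizedError lam (Fᵀ * (F * diagonal σ * Gᵀ) * G) (Fᵀ * U) (Gᵀ * V) := by
          rw [hdiag]
      _ ≤ _ := penalizedError_compress_le hF hG hlam.le _ U V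
  · obtain ⟨E, hE⟩ := exists_penalizedError_diagonal_eq hk σ lam
    exact ⟨F * E, G * E, (penalizedError_mul_eq hF hG lam _ E).trans hE⟩
end

section
/- For the RSVD solution U* = F_k, V* = G_kΩ with Ω = diag(√(σᵢ−λ)₊), the reconstruction is U*V*ᵀ = Σᵢ₌₁ᵏ √(σᵢ−λ)₊ fᵢgᵢᵀ; i.e., RSVD performs soft-thresholding √(σᵢ−λ)₊ on the singular values (in contrast to the standard soft-threshold σᵢ−λ of nuclear-norm regularization). -/
open Matrix BigOperators

/-- The RSVD reconstruction is U*V*ᵀ = Σᵢ₌₁ᵏ √(σᵢ−λ)₊ fᵢgᵢᵀ: soft-thresholding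
    √(σᵢ−λ)₊ on the singular values. -/
theorem rsvd_reconstruction_soft_threshold {n m r k : ℕ} (hk : k ≤ r)
    (X : Matrix (Fin n) (Fin m) ℝ)
    (F : Matrix (Fin n) (Fin r) ℝ) (G : Matrix (Fin m) (Fin r) ℝ)
    (σ : Fin r → ℝ) (hσpos : ∀ i, 0 < σ i) (hσmono : Antitone σ)
    (hF : Fᵀ * F = 1) (hG : Gᵀ * G = 1)
    (hX : X = F * Matrix.diagonal σ * Gᵀ)
    (lam : ℝ) (hlam : 0 < lam)
    (Us : Matrix (Fin n) (Fin k) ℝ) (hUs : Us = F.submatrix id (Fin.castLE hk))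
    (Vs : Matrix (Fin m) (Fin k) ℝ)
    (hVs : Vs = G.submatrix id (Fin.castLE hk) *
      Matrix.diagonal (fun i => Real.sqrt (max (σ (Fin.castLE hk i) - lam) 0))) :
    Us * Vsᵀ = ∑ i : Fin k,
      Real.sqrt (max (σ (Fin.castLE hk i) - lam) 0) •
        Matrix.vecMulVec (fun a => F a (Fin.castLE hk i)) (fun b => G b (Fin.castLE hk i)) := by
  subst hUs hVs
  ext a b
  simp [Matrix.mul_apply, Matrix.vecMulVec_apply, Matrix.diagonal, Matrix.sum_apply,
    Finset.mul_sum]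
  exact Finset.sum_congr rfl fun i _ => by ring
end
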